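/- Let $(M,g)$ be an ultrastatic spacetime, $u^\mu = \gamma(1,v^i)$ a stationary unit timelike field with $v$ a Killing field of the spatial sections, and let $T^{\mu\nu} = \mathcal{P}(d\, u^\mu u^\nu + g^{\mu\nu})$ with $\mathcal{P}$ independent of $t$. Then $\nabla_\mu T^{\mu\nu} = 0$ if and only if $\mathcal{P} = \mathcal{P}_0 \gamma^d$ for some constant $\mathcal{P}_0$, where $\gamma = (1 - v^2)^{-1/2}$. -/

import Mathlib

noncomputable section

/-- Partial derivative of a scalar function on coordinate space `Fin n → ℝ`. -/
def pd {n : ℕ} (i : Fin n) (f : (Fin n → ℝ) → ℝ) (x : Fin n → ℝ) : ℝ :=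
  fderiv ℝ f x (Pi.single i 1)

/-- Christoffel symbols Γ^l_{ij} of a metric `g` with inverse `ginv`. -/
def christoffel {n : ℕ} (g ginv : (Fin n → ℝ) → Matrix (Fin n) (Fin n) ℝ)
    (l i j : Fin n) (x : Fin n → ℝ) : ℝ :=
  (1/2) * ∑ r, ginv x l r *
    (pd i (fun y => g y r j) x + pd j (fun y => g y r i) x - pd r (fun y => g y i j) x)

/-- Covariant derivative ∇_i u^j of a vector field. -/
def covDerivVec {n : ℕ} (g ginv : (Fin n → ℝ) → Matrix (Fin n) (Fin n) ℝ)
    (u : (Fin n → ℝ) → Fin n → ℝ) (i j : Fin n) (x : Fin n → ℝ) : ℝ :=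
  pd i (fun y => u y j) x + ∑ r, christoffel g ginv j i r x * u x r

/-- Covariant derivative ∇_i w_j of a covector field. -/
def covDerivCovec {n : ℕ} (g ginv : (Fin n → ℝ) → Matrix (Fin n) (Fin n) ℝ)
    (w : (Fin n → ℝ) → Fin n → ℝ) (i j : Fin n) (x : Fin n → ℝ) : ℝ :=
  pd i (fun y => w y j) x - ∑ r, christoffel g ginv r i j x * w x r

/-- Expansion ϑ = ∇_μ u^μ. -/
def expansion {n : ℕ} (g ginv : (Fin n → ℝ) → Matrix (Fin n) (Fin n) ℝ)
    (u : (Fin n → ℝ) → Fin n → ℝ) (x : Fin n → ℝ) : ℝ :=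
  ∑ i, covDerivVec g ginv u i i x

/-- Projector P^{μν} = g^{μν} + u^μ u^ν. -/
def proj {n : ℕ} (ginv : (Fin n → ℝ) → Matrix (Fin n) (Fin n) ℝ)
    (u : (Fin n → ℝ) → Fin n → ℝ) (μ ν : Fin n) (x : Fin n → ℝ) : ℝ :=
  ginv x μ ν + u x μ * u x ν

/-- Shear tensor σ^{μν} in spacetime dimension `d`:
σ^{μν} = ½(P^{μρ}∇_ρ u^ν + P^{νρ}∇_ρ u^μ) - ϑ P^{μν}/(d-1). -/
def shear {n : ℕ} (d : ℕ) (g ginv : (Fin n → ℝ) → Matrix (Fin n) (Fin n) ℝ)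
    (u : (Fin n → ℝ) → Fin n → ℝ) (μ ν : Fin n) (x : Fin n → ℝ) : ℝ :=
  (1/2) * ((∑ ρ, proj ginv u μ ρ x * covDerivVec g ginv u ρ ν x)
    + (∑ ρ, proj ginv u ν ρ x * covDerivVec g ginv u ρ μ x))
    - (1/((d : ℝ) - 1)) * expansion g ginv u x * proj ginv u μ ν x

/-- Projection of a spacetime point to its spatial coordinates. -/
def sp {n : ℕ} (x : Fin (n+1) → ℝ) : Fin n → ℝ := fun i => x i.succ

/-- Lift of a spatial metric to the ultrastatic spacetime metric
g = -dt² + ḡ_{ij} dx^i dx^j (block diagonal, time-independent). -/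
def liftMetric {n : ℕ} (gb : (Fin n → ℝ) → Matrix (Fin n) (Fin n) ℝ) :
    (Fin (n+1) → ℝ) → Matrix (Fin (n+1)) (Fin (n+1)) ℝ :=
  fun x μ ν =>
    Fin.cases (Fin.cases (-1 : ℝ) (fun _ => 0) ν)
      (fun i => Fin.cases (0 : ℝ) (fun j => gb (sp x) i j) ν) μ

/-- Squared speed v² = ḡ_{ij} v^i v^j. -/
def vsq {n : ℕ} (gb : (Fin n → ℝ) → Matrix (Fin n) (Fin n) ℝ)
    (v : (Fin n → ℝ) → Fin n → ℝ) (y : Fin n → ℝ) : ℝ :=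
  ∑ i, ∑ j, gb y i j * v y i * v y j

/-- Lorentz factor γ = (1 - v²)^{-1/2}. -/
def lorentz {n : ℕ} (gb : (Fin n → ℝ) → Matrix (Fin n) (Fin n) ℝ)
    (v : (Fin n → ℝ) → Fin n → ℝ) (y : Fin n → ℝ) : ℝ :=
  (Real.sqrt (1 - vsq gb v y))⁻¹

/-- The stationary velocity field u^μ = γ(1, v^i) on the ultrastatic spacetime. -/
def uvec {n : ℕ} (gb : (Fin n → ℝ) → Matrix (Fin n) (Fin n) ℝ)
    (v : (Fin n → ℝ) → Fin n → ℝ) (x : Fin (n+1) → ℝ) : Fin (n+1) → ℝ :=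
  fun μ => Fin.cases (lorentz gb v (sp x)) (fun i => lorentz gb v (sp x) * v (sp x) i) μ

/-- Index lowering of a spatial vector field: v_j = ḡ_{jk} v^k. -/
def flat {n : ℕ} (gb : (Fin n → ℝ) → Matrix (Fin n) (Fin n) ℝ)
    (v : (Fin n → ℝ) → Fin n → ℝ) (y : Fin n → ℝ) : Fin n → ℝ :=
  fun j => ∑ k, gb y j k * v y k

/-- `v` is a Killing field of `(Σ, ḡ)`: ∇̄_i v_j + ∇̄_j v_i = 0. -/
def IsKilling {n : ℕ} (gb gbinv : (Fin n → ℝ) → Matrix (Fin n) (Fin n) ℝ)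
    (v : (Fin n → ℝ) → Fin n → ℝ) : Prop :=
  ∀ (y : Fin n → ℝ) (i j : Fin n),
    covDerivCovec gb gbinv (flat gb v) i j y + covDerivCovec gb gbinv (flat gb v) j i y = 0


/-- Covariant divergence ∇_μ T^{μν} of a (2,0)-tensor field. -/
def divTensor {n : ℕ} (g ginv : (Fin n → ℝ) → Matrix (Fin n) (Fin n) ℝ)
    (T : (Fin n → ℝ) → Fin n → Fin n → ℝ) (ν : Fin n) (x : Fin n → ℝ) : ℝ :=
  (∑ μ, pd μ (fun y => T y μ ν) x)
    + (∑ μ, ∑ ρ, christoffel g ginv μ μ ρ x * T x ρ ν)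
    + (∑ μ, ∑ ρ, christoffel g ginv ν μ ρ x * T x μ ρ)

section PdKit

variable {n : ℕ}

lemma pd_const (i : Fin n) (c : ℝ) (x : Fin n → ℝ) : pd i (fun _ => c) x = 0 := by
  simp [pd]

lemma pd_add (i : Fin n) {f g : (Fin n → ℝ) → ℝ} {x : Fin n → ℝ}
    (hf : DifferentiableAt ℝ f x) (hg : DifferentiableAt ℝ g x) :
    pd i (fun y => f y + g y) x = pd i f x + pd i g x := by
  simp [pd, fderiv_fun_add hf hg]

lemma pd_sub (i : Fin n) {f g : (Fin n → ℝ) → ℝ} {x : Fin n → ℝ}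
    (hf : DifferentiableAt ℝ f x) (hg : DifferentiableAt ℝ g x) :
    pd i (fun y => f y - g y) x = pd i f x - pd i g x := by
  simp [pd, fderiv_fun_sub hf hg]

lemma pd_mul (i : Fin n) {f g : (Fin n → ℝ) → ℝ} {x : Fin n → ℝ}
    (hf : DifferentiableAt ℝ f x) (hg : DifferentiableAt ℝ g x) :
    pd i (fun y => f y * g y) x = f x * pd i g x + g x * pd i f x := by
  simp [pd, fderiv_fun_mul hf hg]

lemma pd_sum (i : Fin n) {ι : Type*} (s : Finset ι) {f : ι → (Fin n → ℝ) → ℝ}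
    {x : Fin n → ℝ} (hf : ∀ j ∈ s, DifferentiableAt ℝ (f j) x) :
    pd i (fun y => ∑ j ∈ s, f j y) x = ∑ j ∈ s, pd i (f j) x := by
  simp [pd, fderiv_fun_sum hf]

lemma pd_const_mul (i : Fin n) (c : ℝ) {f : (Fin n → ℝ) → ℝ} {x : Fin n → ℝ}
    (hf : DifferentiableAt ℝ f x) :
    pd i (fun y => c * f y) x = c * pd i f x := by
  simp [pd, fderiv_const_mul hf]

lemma pd_pow (i : Fin n) {f : (Fin n → ℝ) → ℝ} {x : Fin n → ℝ}
    (hf : DifferentiableAt ℝ f x) (m : ℕ) :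
    pd i (fun y => f y ^ (m+1)) x = ((m:ℝ)+1) * f x ^ m * pd i f x := by
  induction m with
  | zero => simp [pd]
  | succ m ih =>
    have : (fun y => f y ^ (m+2)) = fun y => f y ^ (m+1) * f y := by
      funext y; ring
    rw [this, pd_mul i (hf.fun_pow _) hf, ih]
    push_cast
    ring

end PdKit

section SpKit

variable {n : ℕ}

/-- `sp` as a continuous linear map. -/
def spL (n : ℕ) : (Fin (n+1) → ℝ) →L[ℝ] (Fin n → ℝ) :=
  ContinuousLinearMap.pi (fun i => ContinuousLinearMap.proj i.succ)

lemma sp_eq_spL (x : Fin (n+1) → ℝ) : sp x = spL n x := rfl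

lemma fderiv_comp_sp {F : (Fin n → ℝ) → ℝ} {x : Fin (n+1) → ℝ}
    (hF : DifferentiableAt ℝ F (sp x)) :
    fderiv ℝ (fun x => F (sp x)) x = (fderiv ℝ F (sp x)).comp (spL n) := by
  have h : (fun x => F (sp x)) = F ∘ (spL n) := rfl
  rw [h, fderiv_comp x (by exact hF) ((spL n).differentiableAt), (spL n).fderiv]
  rfl

lemma spL_single_zero : spL n (Pi.single 0 1) = 0 := by
  funext i
  simp [spL, Pi.single_apply, Fin.succ_ne_zero]

lemma spL_single_succ (j : Fin n) : spL n (Pi.single j.succ 1) = Pi.single j 1 := by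
  funext i
  simp [spL, Pi.single_apply, Fin.succ_inj]

lemma pd_zero_sp {F : (Fin n → ℝ) → ℝ} {x : Fin (n+1) → ℝ}
    (hF : DifferentiableAt ℝ F (sp x)) :
    pd 0 (fun x => F (sp x)) x = 0 := by
  rw [pd, fderiv_comp_sp hF]
  simp [ContinuousLinearMap.comp_apply, spL_single_zero]

lemma pd_succ_sp {F : (Fin n → ℝ) → ℝ} {x : Fin (n+1) → ℝ}
    (hF : DifferentiableAt ℝ F (sp x)) (j : Fin n) :
    pd j.succ (fun x => F (sp x)) x = pd j F (sp x) := by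
  rw [pd, fderiv_comp_sp hF, pd]
  simp [ContinuousLinearMap.comp_apply, spL_single_succ]

end SpKit
section Spatial
open Matrix

variable {n : ℕ} {gb gbinv : (Fin n → ℝ) → Matrix (Fin n) (Fin n) ℝ}
  {v : (Fin n → ℝ) → Fin n → ℝ}

lemma sum_GiG (hinv : ∀ y, gb y * gbinv y = 1) (y : Fin n → ℝ) (k m : Fin n) :
    ∑ j, gbinv y k j * gb y j m = if k = m then 1 else 0 := by
  have h := mul_eq_one_comm.mp (hinv y)
  have h2 : (gbinv y * gb y) k m = (1 : Matrix (Fin n) (Fin n) ℝ) k m := by rw [h]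
  simpa [Matrix.mul_apply, Matrix.one_apply] using h2

lemma sum_GGi (hinv : ∀ y, gb y * gbinv y = 1) (y : Fin n → ℝ) (k m : Fin n) :
    ∑ j, gb y k j * gbinv y j m = if k = m then 1 else 0 := by
  have h2 : (gb y * gbinv y) k m = (1 : Matrix (Fin n) (Fin n) ℝ) k m := by rw [hinv y]
  simpa [Matrix.mul_apply, Matrix.one_apply] using h2

lemma G_symm (hpos : ∀ y, (gb y).PosDef) (y : Fin n → ℝ) (j k : Fin n) :
    gb y j k = gb y k j := by
  have h := (hpos y).1
  have := congrFun (congrFun h j) k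
  simpa [Matrix.conjTranspose_apply] using this.symm

lemma Gi_symm (hpos : ∀ y, (gb y).PosDef) (hinv : ∀ y, gb y * gbinv y = 1)
    (y : Fin n → ℝ) (j k : Fin n) : gbinv y j k = gbinv y k j := by
  have hA : (gb y)ᵀ = gb y := by
    ext i j; simpa [Matrix.transpose_apply] using G_symm hpos y j i
  have h1 : (gbinv y)ᵀ * gb y = 1 := by
    rw [← hA, ← Matrix.transpose_mul, hinv y, Matrix.transpose_one]
  have h2 : (gbinv y)ᵀ = gbinv y := by
    calc (gbinv y)ᵀ = (gbinv y)ᵀ * (gb y * gbinv y) := by rw [hinv y, mul_one]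
      _ = ((gbinv y)ᵀ * gb y) * gbinv y := by rw [mul_assoc]
      _ = gbinv y := by rw [h1, one_mul]
  have := congrFun (congrFun h2 k) j
  simpa [Matrix.transpose_apply] using this

end Spatial
section Compat

variable {n : ℕ} {gb gbinv : (Fin n → ℝ) → Matrix (Fin n) (Fin n) ℝ}
  {v : (Fin n → ℝ) → Fin n → ℝ}

lemma pd_neg (i : Fin n) {f : (Fin n → ℝ) → ℝ} {x : Fin n → ℝ} :
    pd i (fun y => -f y) x = -pd i f x := by
  simp [pd, fderiv_neg]

lemma sum_if_eq (a : Fin n) (F : Fin n → ℝ) :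
    ∑ r, (if a = r then (1:ℝ) else 0) * F r = F a := by simp

lemma swap_mul_sum (A : Fin n → ℝ) (B : Fin n → Fin n → ℝ) (C : Fin n → ℝ) :
    ∑ c, A c * ∑ r, B c r * C r = ∑ r, (∑ c, A c * B c r) * C r := by
  simp_rw [Finset.mul_sum, Finset.sum_mul]
  rw [Finset.sum_comm]
  apply Finset.sum_congr rfl; intro r _
  apply Finset.sum_congr rfl; intro c _
  ring

lemma sum_sum_collapse (hinv : ∀ y, gb y * gbinv y = 1) (y : Fin n → ℝ) (b : Fin n)
    (F : Fin n → ℝ) :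
    ∑ r, ∑ m, F m * (gb y m r * gbinv y r b) = F b := by
  rw [Finset.sum_comm]
  have h : ∀ m, ∑ r, F m * (gb y m r * gbinv y r b)
      = F m * (if m = b then 1 else 0) := by
    intro m; rw [← Finset.mul_sum, sum_GGi hinv]
  rw [Finset.sum_congr rfl fun m _ => h m]
  simp

lemma sum_sum_collapse' (hinv : ∀ y, gb y * gbinv y = 1) (y : Fin n → ℝ) (a : Fin n)
    (F : Fin n → ℝ) :
    ∑ c, ∑ m, F m * (gbinv y a c * gb y c m) = F a := by
  rw [Finset.sum_comm]
  have h : ∀ m, ∑ c, F m * (gbinv y a c * gb y c m)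
      = F m * (if a = m then 1 else 0) := by
    intro m; rw [← Finset.mul_sum, sum_GiG hinv]
  rw [Finset.sum_congr rfl fun m _ => h m]
  simp

lemma sum_chr_mul (hpos : ∀ y, (gb y).PosDef) (hinv : ∀ y, gb y * gbinv y = 1)
    (y : Fin n → ℝ) (i j k : Fin n) :
    ∑ r, christoffel gb gbinv r i j y * gb y r k
      = (1/2) * (pd i (fun z => gb z k j) y + pd j (fun z => gb z k i) y
          - pd k (fun z => gb z i j) y) := by
  have h1 : ∑ r, christoffel gb gbinv r i j y * gb y r k
      = ∑ r, ∑ s, (gb y k r * gbinv y r s) *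
        ((1/2) * (pd i (fun z => gb z s j) y + pd j (fun z => gb z s i) y
          - pd s (fun z => gb z i j) y)) := by
    apply Finset.sum_congr rfl
    intro r _
    rw [christoffel, Finset.mul_sum, Finset.sum_mul]
    apply Finset.sum_congr rfl
    intro s _
    rw [G_symm hpos y r k]
    ring
  rw [h1, Finset.sum_comm]
  have h2 : ∀ s : Fin n, ∑ r, (gb y k r * gbinv y r s) *
        ((1/2) * (pd i (fun z => gb z s j) y + pd j (fun z => gb z s i) y
          - pd s (fun z => gb z i j) y))
      = (if k = s then 1 else 0) *
        ((1/2) * (pd i (fun z => gb z s j) y + pd j (fun z => gb z s i) y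
          - pd s (fun z => gb z i j) y)) := by
    intro s
    rw [← Finset.sum_mul, sum_GGi hinv]
  rw [Finset.sum_congr rfl (fun s _ => h2 s), sum_if_eq]

lemma compat (hpos : ∀ y, (gb y).PosDef) (hinv : ∀ y, gb y * gbinv y = 1)
    (y : Fin n → ℝ) (i j k : Fin n) :
    pd i (fun z => gb z j k) y
      = ∑ r, christoffel gb gbinv r i j y * gb y r k
        + ∑ r, christoffel gb gbinv r i k y * gb y j r := by
  have h2 : ∑ r, christoffel gb gbinv r i k y * gb y j r
      = ∑ r, christoffel gb gbinv r i k y * gb y r j := by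
    apply Finset.sum_congr rfl; intro r _; rw [G_symm hpos y j r]
  rw [h2, sum_chr_mul hpos hinv, sum_chr_mul hpos hinv]
  have e1 : (fun z => gb z k j) = (fun z => gb z j k) := by
    funext z; exact G_symm hpos z k j
  have e2 : (fun z => gb z k i) = (fun z => gb z i k) := by
    funext z; exact G_symm hpos z k i
  have e3 : (fun z => gb z j i) = (fun z => gb z i j) := by
    funext z; exact G_symm hpos z j i
  rw [e1, e2, e3]
  ring

lemma compatInv (hg : ∀ i j, ContDiff ℝ (⊤ : ℕ∞) fun y => gb y i j)
    (hginv : ∀ i j, ContDiff ℝ (⊤ : ℕ∞) fun y => gbinv y i j)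
    (hpos : ∀ y, (gb y).PosDef) (hinv : ∀ y, gb y * gbinv y = 1)
    (y : Fin n → ℝ) (k a b : Fin n) :
    pd k (fun z => gbinv z a b) y
      = -(∑ r, christoffel gb gbinv a k r y * gbinv y r b)
        - ∑ r, christoffel gb gbinv b k r y * gbinv y a r := by
  have dG : ∀ c r, DifferentiableAt ℝ (fun z => gb z c r) y :=
    fun c r => ((hg c r).differentiable (by simp)).differentiableAt
  have dGi : ∀ c r, DifferentiableAt ℝ (fun z => gbinv z c r) y :=
    fun c r => ((hginv c r).differentiable (by simp)).differentiableAt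
  have M : ∀ c, ∑ r, gb y c r * pd k (fun z => gbinv z r b) y
      = -∑ r, gbinv y r b * pd k (fun z => gb z c r) y := by
    intro c
    have hconst : (fun z => ∑ r, gb z c r * gbinv z r b)
        = (fun _ => if c = b then (1:ℝ) else 0) := by
      funext z; exact sum_GGi hinv z c b
    have h0 : pd k (fun z => ∑ r, gb z c r * gbinv z r b) y = 0 := by
      rw [hconst, pd_const]
    rw [pd_sum k Finset.univ (fun r _ => (dG c r).fun_mul (dGi r b))] at h0
    have hterm : ∀ r : Fin n, pd k (fun z => gb z c r * gbinv z r b) y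
        = gb y c r * pd k (fun z => gbinv z r b) y
          + gbinv y r b * pd k (fun z => gb z c r) y :=
      fun r => pd_mul k (dG c r) (dGi r b)
    rw [Finset.sum_congr rfl (fun r _ => hterm r), Finset.sum_add_distrib] at h0
    linarith [h0]
  have key : ∑ c, gbinv y a c * ∑ r, gb y c r * pd k (fun z => gbinv z r b) y
      = pd k (fun z => gbinv z a b) y := by
    rw [swap_mul_sum (gbinv y a) (gb y)]
    rw [Finset.sum_congr rfl fun r _ => by rw [sum_GiG hinv y a r]]
    exact sum_if_eq a _
  rw [← key]
  have e1 : ∀ c, gbinv y a c * ∑ r, gb y c r * pd k (fun z => gbinv z r b) y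
      = -∑ r, (gbinv y a c * gbinv y r b) * pd k (fun z => gb z c r) y := by
    intro c
    rw [M c, mul_neg, Finset.mul_sum]
    congr 1
    apply Finset.sum_congr rfl; intros; ring
  rw [Finset.sum_congr rfl fun c _ => e1 c, Finset.sum_neg_distrib]
  have e2 : ∀ c r : Fin n, (gbinv y a c * gbinv y r b) * pd k (fun z => gb z c r) y
      = (gbinv y a c * gbinv y r b) * (∑ m, christoffel gb gbinv m k c y * gb y m r)
        + (gbinv y a c * gbinv y r b) * (∑ m, christoffel gb gbinv m k r y * gb y c m) := by
    intro c r; rw [compat hpos hinv y k c r]; ring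
  have e3 : ∑ c, ∑ r, (gbinv y a c * gbinv y r b) * pd k (fun z => gb z c r) y
      = (∑ c, ∑ r, (gbinv y a c * gbinv y r b) *
          (∑ m, christoffel gb gbinv m k c y * gb y m r))
        + (∑ c, ∑ r, (gbinv y a c * gbinv y r b) *
          (∑ m, christoffel gb gbinv m k r y * gb y c m)) := by
    rw [← Finset.sum_add_distrib]
    apply Finset.sum_congr rfl; intro c _
    rw [← Finset.sum_add_distrib]
    apply Finset.sum_congr rfl; intro r _
    exact e2 c r
  rw [e3]
  have hT1 : ∑ c, ∑ r, (gbinv y a c * gbinv y r b) *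
        (∑ m, christoffel gb gbinv m k c y * gb y m r)
      = ∑ r, christoffel gb gbinv b k r y * gbinv y a r := by
    have h4 : ∀ c, ∑ r, (gbinv y a c * gbinv y r b) *
          (∑ m, christoffel gb gbinv m k c y * gb y m r)
        = ∑ r, ∑ m, (gbinv y a c * christoffel gb gbinv m k c y) *
            (gb y m r * gbinv y r b) := by
      intro c
      apply Finset.sum_congr rfl; intro r _
      rw [Finset.mul_sum]
      apply Finset.sum_congr rfl; intro m _; ring
    rw [Finset.sum_congr rfl fun c _ => h4 c]
    rw [Finset.sum_congr rfl fun c _ => sum_sum_collapse hinv y b _]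
    apply Finset.sum_congr rfl; intro c _; ring
  have hT2 : ∑ c, ∑ r, (gbinv y a c * gbinv y r b) *
        (∑ m, christoffel gb gbinv m k r y * gb y c m)
      = ∑ r, christoffel gb gbinv a k r y * gbinv y r b := by
    rw [Finset.sum_comm]
    have h5 : ∀ r, ∑ c, (gbinv y a c * gbinv y r b) *
          (∑ m, christoffel gb gbinv m k r y * gb y c m)
        = ∑ c, ∑ m, (gbinv y r b * christoffel gb gbinv m k r y) *
            (gbinv y a c * gb y c m) := by
      intro r
      apply Finset.sum_congr rfl; intro c _
      rw [Finset.mul_sum]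
      apply Finset.sum_congr rfl; intro m _; ring
    rw [Finset.sum_congr rfl fun r _ => h5 r]
    rw [Finset.sum_congr rfl fun r _ => sum_sum_collapse' hinv y a _]
    apply Finset.sum_congr rfl; intro r _; ring
  rw [hT1, hT2]
  ring

end Compat
section Killing

variable {n : ℕ} {gb gbinv : (Fin n → ℝ) → Matrix (Fin n) (Fin n) ℝ}
  {v : (Fin n → ℝ) → Fin n → ℝ}

lemma lower (hg : ∀ i j, ContDiff ℝ (⊤ : ℕ∞) fun y => gb y i j)
    (hv : ∀ i, ContDiff ℝ (⊤ : ℕ∞) fun y => v y i)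
    (hpos : ∀ y, (gb y).PosDef) (hinv : ∀ y, gb y * gbinv y = 1)
    (y : Fin n → ℝ) (i j : Fin n) :
    covDerivCovec gb gbinv (flat gb v) i j y
      = ∑ k, gb y j k * covDerivVec gb gbinv v i k y := by
  have dG : ∀ c r, DifferentiableAt ℝ (fun z => gb z c r) y :=
    fun c r => ((hg c r).differentiable (by simp)).differentiableAt
  have dV : ∀ k, DifferentiableAt ℝ (fun z => v z k) y :=
    fun k => ((hv k).differentiable (by simp)).differentiableAt
  have hWfun : (fun z => flat gb v z j) = fun z => ∑ k, gb z j k * v z k := rfl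
  rw [covDerivCovec, hWfun]
  rw [pd_sum i Finset.univ (fun k _ => (dG j k).fun_mul (dV k))]
  have h1 : ∀ k : Fin n, pd i (fun z => gb z j k * v z k) y
      = gb y j k * pd i (fun z => v z k) y + v y k * pd i (fun z => gb z j k) y :=
    fun k => pd_mul i (dG j k) (dV k)
  rw [Finset.sum_congr rfl fun k _ => h1 k, Finset.sum_add_distrib]
  have h2 : ∀ k : Fin n, v y k * pd i (fun z => gb z j k) y
      = v y k * (∑ r, christoffel gb gbinv r i j y * gb y r k)
        + v y k * (∑ r, christoffel gb gbinv r i k y * gb y j r) := by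
    intro k; rw [compat hpos hinv y i j k]; ring
  rw [Finset.sum_congr rfl fun k _ => h2 k, Finset.sum_add_distrib]
  have hA : ∑ k, v y k * ∑ r, christoffel gb gbinv r i j y * gb y r k
      = ∑ r, christoffel gb gbinv r i j y * flat gb v y r := by
    calc ∑ k, v y k * ∑ r, christoffel gb gbinv r i j y * gb y r k
        = ∑ k, ∑ r, christoffel gb gbinv r i j y * (gb y r k * v y k) := by
          apply Finset.sum_congr rfl; intro k _
          rw [Finset.mul_sum]
          apply Finset.sum_congr rfl; intro r _; ring
      _ = ∑ r, ∑ k, christoffel gb gbinv r i j y * (gb y r k * v y k) :=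
          Finset.sum_comm
      _ = ∑ r, christoffel gb gbinv r i j y * flat gb v y r := by
          apply Finset.sum_congr rfl; intro r _
          rw [← Finset.mul_sum]; rfl
  have hB : ∑ k, v y k * ∑ r, christoffel gb gbinv r i k y * gb y j r
      = ∑ k, gb y j k * (∑ r, christoffel gb gbinv k i r y * v y r) := by
    calc ∑ k, v y k * ∑ r, christoffel gb gbinv r i k y * gb y j r
        = ∑ k, ∑ r, gb y j r * (christoffel gb gbinv r i k y * v y k) := by
          apply Finset.sum_congr rfl; intro k _
          rw [Finset.mul_sum]
          apply Finset.sum_congr rfl; intro r _; ring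
      _ = ∑ r, ∑ k, gb y j r * (christoffel gb gbinv r i k y * v y k) :=
          Finset.sum_comm
      _ = ∑ k, gb y j k * (∑ r, christoffel gb gbinv k i r y * v y r) := by
          apply Finset.sum_congr rfl; intro r _
          rw [← Finset.mul_sum]
  rw [hA, hB]
  simp only [covDerivVec, mul_add]
  rw [Finset.sum_add_distrib]
  ring

lemma D_from_K (hg : ∀ i j, ContDiff ℝ (⊤ : ℕ∞) fun y => gb y i j)
    (hv : ∀ i, ContDiff ℝ (⊤ : ℕ∞) fun y => v y i)
    (hpos : ∀ y, (gb y).PosDef) (hinv : ∀ y, gb y * gbinv y = 1)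
    (y : Fin n → ℝ) (i k : Fin n) :
    covDerivVec gb gbinv v i k y
      = ∑ m, gbinv y k m * covDerivCovec gb gbinv (flat gb v) i m y := by
  have h : ∑ m, gbinv y k m * covDerivCovec gb gbinv (flat gb v) i m y
      = ∑ m, gbinv y k m * ∑ j, gb y m j * covDerivVec gb gbinv v i j y := by
    apply Finset.sum_congr rfl; intro m _
    rw [lower hg hv hpos hinv y i m]
  rw [h, swap_mul_sum (gbinv y k) (gb y)]
  rw [Finset.sum_congr rfl fun r _ => by rw [sum_GiG hinv y k r]]
  rw [sum_if_eq]

lemma exp_zero (hg : ∀ i j, ContDiff ℝ (⊤ : ℕ∞) fun y => gb y i j)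
    (hv : ∀ i, ContDiff ℝ (⊤ : ℕ∞) fun y => v y i)
    (hpos : ∀ y, (gb y).PosDef) (hinv : ∀ y, gb y * gbinv y = 1)
    (hkilling : IsKilling gb gbinv v) (y : Fin n → ℝ) :
    expansion gb gbinv v y = 0 := by
  have hK : ∀ i m : Fin n, covDerivCovec gb gbinv (flat gb v) i m y
      = -covDerivCovec gb gbinv (flat gb v) m i y := by
    intro i m; have := hkilling y i m; linarith
  have hexp : expansion gb gbinv v y
      = ∑ i, ∑ m, gbinv y i m * covDerivCovec gb gbinv (flat gb v) i m y := by
    rw [expansion]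
    apply Finset.sum_congr rfl; intro i _
    exact D_from_K hg hv hpos hinv y i i
  have hneg : ∑ i, ∑ m, gbinv y i m * covDerivCovec gb gbinv (flat gb v) i m y
      = -∑ i, ∑ m, gbinv y i m * covDerivCovec gb gbinv (flat gb v) i m y := by
    nth_rewrite 1 [Finset.sum_comm]
    rw [← Finset.sum_neg_distrib]
    apply Finset.sum_congr rfl; intro i _
    rw [← Finset.sum_neg_distrib]
    apply Finset.sum_congr rfl; intro m _
    rw [hK m i, Gi_symm hpos hinv y m i]
    ring
  rw [hexp]
  linarith [hneg]

lemma pd_vsq (hg : ∀ i j, ContDiff ℝ (⊤ : ℕ∞) fun y => gb y i j)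
    (hv : ∀ i, ContDiff ℝ (⊤ : ℕ∞) fun y => v y i)
    (hpos : ∀ y, (gb y).PosDef) (hinv : ∀ y, gb y * gbinv y = 1)
    (y : Fin n → ℝ) (i : Fin n) :
    pd i (vsq gb v) y
      = 2 * ∑ j, v y j * covDerivCovec gb gbinv (flat gb v) i j y := by
  have dG : ∀ c r, DifferentiableAt ℝ (fun z => gb z c r) y :=
    fun c r => ((hg c r).differentiable (by simp)).differentiableAt
  have dV : ∀ k, DifferentiableAt ℝ (fun z => v z k) y :=
    fun k => ((hv k).differentiable (by simp)).differentiableAt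
  have dW : ∀ j, DifferentiableAt ℝ (fun z => flat gb v z j) y := by
    intro j
    have : (fun z => flat gb v z j) = fun z => ∑ k, gb z j k * v z k := rfl
    rw [this]
    exact DifferentiableAt.fun_sum fun k _ => (dG j k).mul (dV k)
  have hs : vsq gb v = fun z => ∑ j, flat gb v z j * v z j := by
    funext z
    show ∑ j, ∑ k, gb z j k * v z j * v z k = ∑ j, flat gb v z j * v z j
    apply Finset.sum_congr rfl; intro j _
    rw [show flat gb v z j * v z j = (∑ k, gb z j k * v z k) * v z j from rfl]
    rw [Finset.sum_mul]
    apply Finset.sum_congr rfl; intro k _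
    ring
  rw [hs]
  rw [pd_sum i Finset.univ (fun j _ => (dW j).fun_mul (dV j))]
  have h1 : ∀ j : Fin n, pd i (fun z => flat gb v z j * v z j) y
      = flat gb v y j * pd i (fun z => v z j) y + v y j * pd i (fun z => flat gb v z j) y :=
    fun j => pd_mul i (dW j) (dV j)
  rw [Finset.sum_congr rfl fun j _ => h1 j, Finset.sum_add_distrib]
  have hpdW : ∀ j : Fin n, pd i (fun z => flat gb v z j) y
      = covDerivCovec gb gbinv (flat gb v) i j y
        + ∑ r, christoffel gb gbinv r i j y * flat gb v y r := by
    intro j; rw [covDerivCovec]; ring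
  have hpdV : ∀ j : Fin n, pd i (fun z => v z j) y
      = covDerivVec gb gbinv v i j y - ∑ r, christoffel gb gbinv j i r y * v y r := by
    intro j; rw [covDerivVec]; ring
  have s1 : ∑ j, v y j * pd i (fun z => flat gb v z j) y
      = ∑ j, v y j * (covDerivCovec gb gbinv (flat gb v) i j y
        + ∑ r, christoffel gb gbinv r i j y * flat gb v y r) :=
    Finset.sum_congr rfl fun j _ => by rw [hpdW j]
  have s2 : ∑ j, flat gb v y j * pd i (fun z => v z j) y
      = ∑ j, flat gb v y j * (covDerivVec gb gbinv v i j y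
        - ∑ r, christoffel gb gbinv j i r y * v y r) :=
    Finset.sum_congr rfl fun j _ => by rw [hpdV j]
  rw [s1, s2]
  -- split everything
  have e1 : ∑ j, flat gb v y j *
        (covDerivVec gb gbinv v i j y - ∑ r, christoffel gb gbinv j i r y * v y r)
      = (∑ j, flat gb v y j * covDerivVec gb gbinv v i j y)
        - ∑ j, ∑ r, flat gb v y j * (christoffel gb gbinv j i r y * v y r) := by
    rw [← Finset.sum_sub_distrib]
    apply Finset.sum_congr rfl; intro j _
    rw [mul_sub, Finset.mul_sum]
  have e2 : ∑ j, v y j *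
        (covDerivCovec gb gbinv (flat gb v) i j y
          + ∑ r, christoffel gb gbinv r i j y * flat gb v y r)
      = (∑ j, v y j * covDerivCovec gb gbinv (flat gb v) i j y)
        + ∑ j, ∑ r, flat gb v y r * (christoffel gb gbinv r i j y * v y j) := by
    rw [← Finset.sum_add_distrib]
    apply Finset.sum_congr rfl; intro j _
    rw [mul_add, Finset.mul_sum]
    congr 1
    apply Finset.sum_congr rfl; intro r _; ring
  rw [e1, e2]
  have e3 : ∑ j, ∑ r, flat gb v y j * (christoffel gb gbinv j i r y * v y r)
      = ∑ j, ∑ r, flat gb v y r * (christoffel gb gbinv r i j y * v y j) :=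
    Finset.sum_comm
  have e4 : ∑ j, flat gb v y j * covDerivVec gb gbinv v i j y
      = ∑ j, v y j * covDerivCovec gb gbinv (flat gb v) i j y := by
    have h5 : ∀ j : Fin n, flat gb v y j * covDerivVec gb gbinv v i j y
        = ∑ k, v y k * (gb y k j * covDerivVec gb gbinv v i j y) := by
      intro j
      rw [show flat gb v y j * covDerivVec gb gbinv v i j y
          = (∑ k, gb y j k * v y k) * covDerivVec gb gbinv v i j y from rfl]
      rw [Finset.sum_mul]
      apply Finset.sum_congr rfl; intro k _
      rw [G_symm hpos y j k]; ring
    rw [Finset.sum_congr rfl fun j _ => h5 j, Finset.sum_comm]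
    apply Finset.sum_congr rfl; intro k _
    rw [← Finset.mul_sum, lower hg hv hpos hinv y i k]
  rw [e3, e4]
  ring

end Killing
section Gamma

variable {n : ℕ} {gb gbinv : (Fin n → ℝ) → Matrix (Fin n) (Fin n) ℝ}
  {v : (Fin n → ℝ) → Fin n → ℝ}

lemma vK_zero (hkilling : IsKilling gb gbinv v) (y : Fin n → ℝ) :
    ∑ i, v y i * ∑ j, v y j * covDerivCovec gb gbinv (flat gb v) i j y = 0 := by
  have hK : ∀ i m : Fin n, covDerivCovec gb gbinv (flat gb v) i m y
      = -covDerivCovec gb gbinv (flat gb v) m i y := by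
    intro i m; have := hkilling y i m; linarith
  have h1 : ∑ i, v y i * ∑ j, v y j * covDerivCovec gb gbinv (flat gb v) i j y
      = ∑ i, ∑ j, v y i * (v y j * covDerivCovec gb gbinv (flat gb v) i j y) :=
    Finset.sum_congr rfl fun i _ => Finset.mul_sum _ _ _
  have h2 : ∑ i, ∑ j, v y i * (v y j * covDerivCovec gb gbinv (flat gb v) i j y)
      = -∑ i, ∑ j, v y i * (v y j * covDerivCovec gb gbinv (flat gb v) i j y) := by
    nth_rewrite 1 [Finset.sum_comm]
    rw [← Finset.sum_neg_distrib]
    apply Finset.sum_congr rfl; intro i _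
    rw [← Finset.sum_neg_distrib]
    apply Finset.sum_congr rfl; intro j _
    rw [hK j i]; ring
  rw [h1]; linarith [h2]

lemma v_pd_vsq (hg : ∀ i j, ContDiff ℝ (⊤ : ℕ∞) fun y => gb y i j)
    (hv : ∀ i, ContDiff ℝ (⊤ : ℕ∞) fun y => v y i)
    (hpos : ∀ y, (gb y).PosDef) (hinv : ∀ y, gb y * gbinv y = 1)
    (hkilling : IsKilling gb gbinv v) (y : Fin n → ℝ) :
    ∑ i, v y i * pd i (vsq gb v) y = 0 := by
  have h1 : ∑ i, v y i * pd i (vsq gb v) y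
      = ∑ i, 2 * (v y i * ∑ j, v y j * covDerivCovec gb gbinv (flat gb v) i j y) :=
    Finset.sum_congr rfl fun i _ => by rw [pd_vsq hg hv hpos hinv y i]; ring
  rw [h1, ← Finset.mul_sum, vK_zero hkilling y, mul_zero]

lemma vD (hg : ∀ i j, ContDiff ℝ (⊤ : ℕ∞) fun y => gb y i j)
    (hv : ∀ i, ContDiff ℝ (⊤ : ℕ∞) fun y => v y i)
    (hpos : ∀ y, (gb y).PosDef) (hinv : ∀ y, gb y * gbinv y = 1)
    (hkilling : IsKilling gb gbinv v) (y : Fin n → ℝ) (j : Fin n) :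
    ∑ i, v y i * covDerivVec gb gbinv v i j y
      = -(1/2) * ∑ m, gbinv y j m * pd m (vsq gb v) y := by
  have hK : ∀ i m : Fin n, covDerivCovec gb gbinv (flat gb v) i m y
      = -covDerivCovec gb gbinv (flat gb v) m i y := by
    intro i m; have := hkilling y i m; linarith
  have h1 : ∑ i, v y i * covDerivVec gb gbinv v i j y
      = ∑ i, ∑ m, gbinv y j m * (v y i * covDerivCovec gb gbinv (flat gb v) i m y) := by
    apply Finset.sum_congr rfl; intro i _
    rw [D_from_K hg hv hpos hinv y i j, Finset.mul_sum]
    apply Finset.sum_congr rfl; intro m _; ring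
  rw [h1, Finset.sum_comm]
  have h2 : ∀ m : Fin n, ∑ i, gbinv y j m * (v y i * covDerivCovec gb gbinv (flat gb v) i m y)
      = gbinv y j m * -((1/2) * pd m (vsq gb v) y) := by
    intro m
    rw [← Finset.mul_sum]
    congr 1
    have h3 : ∑ i, v y i * covDerivCovec gb gbinv (flat gb v) i m y
        = -∑ i, v y i * covDerivCovec gb gbinv (flat gb v) m i y := by
      rw [← Finset.sum_neg_distrib]
      apply Finset.sum_congr rfl; intro i _
      rw [hK i m]; ring
    rw [h3, pd_vsq hg hv hpos hinv y m]
    ring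
  rw [Finset.sum_congr rfl fun m _ => h2 m, Finset.mul_sum]
  apply Finset.sum_congr rfl; intro m _; ring

lemma sqrt1s_pos (hvlt : ∀ y, vsq gb v y < 1) (y : Fin n → ℝ) : 0 < Real.sqrt (1 - vsq gb v y) :=
  Real.sqrt_pos.mpr (by linarith [hvlt y])

lemma lorentz_pos (hvlt : ∀ y, vsq gb v y < 1) (y : Fin n → ℝ) : 0 < lorentz gb v y :=
  inv_pos.mpr (sqrt1s_pos hvlt y)

lemma lorentz_mul_sqrt (hvlt : ∀ y, vsq gb v y < 1) (y : Fin n → ℝ) :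
    lorentz gb v y * Real.sqrt (1 - vsq gb v y) = 1 :=
  inv_mul_cancel₀ (ne_of_gt (sqrt1s_pos hvlt y))

lemma contDiff_vsq (hg : ∀ i j, ContDiff ℝ (⊤ : ℕ∞) fun y => gb y i j)
    (hv : ∀ i, ContDiff ℝ (⊤ : ℕ∞) fun y => v y i) : ContDiff ℝ (⊤ : ℕ∞) (vsq gb v) := by
  have : vsq gb v = fun y => ∑ i, ∑ j, gb y i j * v y i * v y j := rfl
  rw [this]
  exact ContDiff.sum fun i _ => ContDiff.sum fun j _ => ((hg i j).mul (hv i)).mul (hv j)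

lemma contDiffAt_sqrt1s (hvlt : ∀ y, vsq gb v y < 1) (hg : ∀ i j, ContDiff ℝ (⊤ : ℕ∞) fun y => gb y i j)
    (hv : ∀ i, ContDiff ℝ (⊤ : ℕ∞) fun y => v y i) (y : Fin n → ℝ) :
    ContDiffAt ℝ (⊤ : ℕ∞) (fun z => Real.sqrt (1 - vsq gb v z)) y := by
  have h1 : ContDiffAt ℝ (⊤ : ℕ∞) Real.sqrt (1 - vsq gb v y) :=
    Real.contDiffAt_sqrt (ne_of_gt (by linarith [hvlt y]))
  have h2 : ContDiffAt ℝ (⊤ : ℕ∞) (fun z => 1 - vsq gb v z) y :=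
    (contDiff_const.sub (contDiff_vsq hg hv)).contDiffAt
  exact h1.comp y h2

lemma contDiffAt_lorentz (hvlt : ∀ y, vsq gb v y < 1) (hg : ∀ i j, ContDiff ℝ (⊤ : ℕ∞) fun y => gb y i j)
    (hv : ∀ i, ContDiff ℝ (⊤ : ℕ∞) fun y => v y i) (y : Fin n → ℝ) :
    ContDiffAt ℝ (⊤ : ℕ∞) (lorentz gb v) y := by
  have : lorentz gb v = fun z => (Real.sqrt (1 - vsq gb v z))⁻¹ := rfl
  rw [this]
  exact (contDiffAt_sqrt1s hvlt hg hv y).inv (ne_of_gt (sqrt1s_pos hvlt y))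

lemma diff_sqrt1s (hvlt : ∀ y, vsq gb v y < 1) (hg : ∀ i j, ContDiff ℝ (⊤ : ℕ∞) fun y => gb y i j)
    (hv : ∀ i, ContDiff ℝ (⊤ : ℕ∞) fun y => v y i) (y : Fin n → ℝ) :
    DifferentiableAt ℝ (fun z => Real.sqrt (1 - vsq gb v z)) y :=
  (contDiffAt_sqrt1s hvlt hg hv y).differentiableAt (by simp)

lemma diff_lorentz (hvlt : ∀ y, vsq gb v y < 1) (hg : ∀ i j, ContDiff ℝ (⊤ : ℕ∞) fun y => gb y i j)
    (hv : ∀ i, ContDiff ℝ (⊤ : ℕ∞) fun y => v y i) (y : Fin n → ℝ) :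
    DifferentiableAt ℝ (lorentz gb v) y :=
  (contDiffAt_lorentz hvlt hg hv y).differentiableAt (by simp)

lemma pd_sqrt1s (hvlt : ∀ y, vsq gb v y < 1) (hg : ∀ i j, ContDiff ℝ (⊤ : ℕ∞) fun y => gb y i j)
    (hv : ∀ i, ContDiff ℝ (⊤ : ℕ∞) fun y => v y i) (y : Fin n → ℝ) (i : Fin n) :
    pd i (fun z => Real.sqrt (1 - vsq gb v z)) y
      = -(1/2) * lorentz gb v y * pd i (vsq gb v) y := by
  have hf := diff_sqrt1s hvlt hg hv y
  have hdv : DifferentiableAt ℝ (vsq gb v) y :=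
    ((contDiff_vsq hg hv).differentiable (by simp)).differentiableAt
  have hmul := pd_mul i hf hf
  have hsq : (fun z => Real.sqrt (1 - vsq gb v z) * Real.sqrt (1 - vsq gb v z))
      = fun z => 1 - vsq gb v z := by
    funext z
    exact Real.mul_self_sqrt (by linarith [hvlt z])
  rw [hsq] at hmul
  have hpd1 : pd i (fun z => 1 - vsq gb v z) y = -pd i (vsq gb v) y := by
    rw [pd_sub i (differentiableAt_const 1) hdv, pd_const]; ring
  rw [hpd1] at hmul
  -- hmul : -pd vsq = f * pdf + f * pdf
  have hfne : Real.sqrt (1 - vsq gb v y) ≠ 0 := ne_of_gt (sqrt1s_pos hvlt y)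
  have hlor : lorentz gb v y * Real.sqrt (1 - vsq gb v y) = 1 := lorentz_mul_sqrt hvlt y
  have goal2 : Real.sqrt (1 - vsq gb v y) *
      (pd i (fun z => Real.sqrt (1 - vsq gb v z)) y
        - (-(1/2) * lorentz gb v y * pd i (vsq gb v) y)) = 0 := by
    have : Real.sqrt (1 - vsq gb v y) * (lorentz gb v y * pd i (vsq gb v) y)
        = pd i (vsq gb v) y := by
      calc Real.sqrt (1 - vsq gb v y) * (lorentz gb v y * pd i (vsq gb v) y)
          = (lorentz gb v y * Real.sqrt (1 - vsq gb v y)) * pd i (vsq gb v) y := by ring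
        _ = pd i (vsq gb v) y := by rw [hlor, one_mul]
    rw [mul_sub]
    rw [show Real.sqrt (1 - vsq gb v y) * (-(1/2) * lorentz gb v y * pd i (vsq gb v) y)
        = -(1/2) * (Real.sqrt (1 - vsq gb v y) * (lorentz gb v y * pd i (vsq gb v) y)) from by ring]
    rw [this]
    linarith [hmul]
  rcases mul_eq_zero.mp goal2 with h | h
  · exact absurd h hfne
  · linarith [h]

lemma pd_lorentz (hvlt : ∀ y, vsq gb v y < 1) (hg : ∀ i j, ContDiff ℝ (⊤ : ℕ∞) fun y => gb y i j)
    (hv : ∀ i, ContDiff ℝ (⊤ : ℕ∞) fun y => v y i) (y : Fin n → ℝ) (i : Fin n) :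
    pd i (lorentz gb v) y
      = (1/2) * lorentz gb v y ^ 3 * pd i (vsq gb v) y := by
  have hγ := diff_lorentz hvlt hg hv y
  have hf := diff_sqrt1s hvlt hg hv y
  have hconst : (fun z => lorentz gb v z * Real.sqrt (1 - vsq gb v z)) = fun _ => (1:ℝ) := by
    funext z; exact lorentz_mul_sqrt hvlt z
  have h0 : pd i (fun z => lorentz gb v z * Real.sqrt (1 - vsq gb v z)) y = 0 := by
    rw [hconst, pd_const]
  rw [pd_mul i hγ hf, pd_sqrt1s hvlt hg hv y i] at h0
  -- h0 : γ * (-(1/2) γ pdv) + f * pdγ = 0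
  have hlor := lorentz_mul_sqrt hvlt y
  have : pd i (lorentz gb v) y
      = lorentz gb v y * (Real.sqrt (1 - vsq gb v y) * pd i (lorentz gb v) y) := by
    calc pd i (lorentz gb v) y
        = (lorentz gb v y * Real.sqrt (1 - vsq gb v y)) * pd i (lorentz gb v) y := by
          rw [hlor, one_mul]
      _ = lorentz gb v y * (Real.sqrt (1 - vsq gb v y) * pd i (lorentz gb v) y) := by ring
  rw [this]
  have h1 : Real.sqrt (1 - vsq gb v y) * pd i (lorentz gb v) y
      = (1/2) * lorentz gb v y ^ 2 * pd i (vsq gb v) y := by nlinarith [h0]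
  rw [h1]
  ring

lemma v_pd_lorentz (hvlt : ∀ y, vsq gb v y < 1) (hg : ∀ i j, ContDiff ℝ (⊤ : ℕ∞) fun y => gb y i j)
    (hv : ∀ i, ContDiff ℝ (⊤ : ℕ∞) fun y => v y i)
    (hpos : ∀ y, (gb y).PosDef) (hinv : ∀ y, gb y * gbinv y = 1)
    (hkilling : IsKilling gb gbinv v) (y : Fin n → ℝ) :
    ∑ i, v y i * pd i (lorentz gb v) y = 0 := by
  have h1 : ∑ i, v y i * pd i (lorentz gb v) y
      = ∑ i, (1/2) * lorentz gb v y ^ 3 * (v y i * pd i (vsq gb v) y) :=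
    Finset.sum_congr rfl fun i _ => by rw [pd_lorentz hvlt hg hv y i]; ring
  rw [h1, ← Finset.mul_sum, v_pd_vsq hg hv hpos hinv hkilling y, mul_zero]

lemma expansion_smul (hv : ∀ i, ContDiff ℝ (⊤ : ℕ∞) fun y => v y i) (y : Fin n → ℝ)
    (f : (Fin n → ℝ) → ℝ) (hf : DifferentiableAt ℝ f y) :
    expansion gb gbinv (fun z k => f z * v z k) y
      = (∑ i, v y i * pd i f y) + f y * expansion gb gbinv v y := by
  have dV : ∀ k, DifferentiableAt ℝ (fun z => v z k) y :=
    fun k => ((hv k).differentiable (by simp)).differentiableAt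
  simp only [expansion, covDerivVec]
  have h1 : ∀ i : Fin n,
      pd i (fun z => f z * v z i) y + ∑ r, christoffel gb gbinv i i r y * (f y * v y r)
        = (v y i * pd i f y)
          + f y * (pd i (fun z => v z i) y + ∑ r, christoffel gb gbinv i i r y * v y r) := by
    intro i
    rw [pd_mul i hf (dV i)]
    have h2 : ∑ r, christoffel gb gbinv i i r y * (f y * v y r)
        = ∑ r, f y * (christoffel gb gbinv i i r y * v y r) :=
      Finset.sum_congr rfl fun r _ => by ring
    rw [h2, mul_add, Finset.mul_sum]
    ring
  rw [Finset.sum_congr rfl fun i _ => h1 i, Finset.sum_add_distrib, ← Finset.mul_sum]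

end Gamma
section Lift

variable {n : ℕ} {gb gbinv : (Fin n → ℝ) → Matrix (Fin n) (Fin n) ℝ}
  {v : (Fin n → ℝ) → Fin n → ℝ}

lemma liftM_00 (A : (Fin n → ℝ) → Matrix (Fin n) (Fin n) ℝ) (x : Fin (n+1) → ℝ) :
    liftMetric A x 0 0 = -1 := by simp [liftMetric]

lemma liftM_0succ (A : (Fin n → ℝ) → Matrix (Fin n) (Fin n) ℝ) (x : Fin (n+1) → ℝ)
    (j : Fin n) : liftMetric A x 0 j.succ = 0 := by simp [liftMetric]

lemma liftM_succ0 (A : (Fin n → ℝ) → Matrix (Fin n) (Fin n) ℝ) (x : Fin (n+1) → ℝ)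
    (i : Fin n) : liftMetric A x i.succ 0 = 0 := by simp [liftMetric]

lemma liftM_succsucc (A : (Fin n → ℝ) → Matrix (Fin n) (Fin n) ℝ) (x : Fin (n+1) → ℝ)
    (i j : Fin n) : liftMetric A x i.succ j.succ = A (sp x) i j := by simp [liftMetric]

lemma lift_row0 (ν : Fin (n+1)) :
    (fun y : Fin (n+1) → ℝ => liftMetric gb y 0 ν)
      = fun _ => (Fin.cases (-1) (fun _ => 0) ν : ℝ) := by
  funext y
  cases ν using Fin.cases with
  | zero => simp [liftMetric]
  | succ j => simp [liftMetric]

lemma lift_col0 (μ : Fin (n+1)) :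
    (fun y : Fin (n+1) → ℝ => liftMetric gb y μ 0)
      = fun _ => (Fin.cases (-1) (fun _ => 0) μ : ℝ) := by
  funext y
  cases μ using Fin.cases with
  | zero => simp [liftMetric]
  | succ j => simp [liftMetric]

lemma lift_ss (i j : Fin n) :
    (fun y : Fin (n+1) → ℝ => liftMetric gb y i.succ j.succ)
      = fun y => gb (sp y) i j := by
  funext y; simp [liftMetric]

lemma pd0_lift (hg : ∀ i j, ContDiff ℝ (⊤ : ℕ∞) fun y => gb y i j) (x : Fin (n+1) → ℝ)
    (μ ν : Fin (n+1)) : pd 0 (fun y => liftMetric gb y μ ν) x = 0 := by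
  cases μ using Fin.cases with
  | zero => rw [lift_row0]; exact pd_const _ _ _
  | succ i =>
    cases ν using Fin.cases with
    | zero => rw [lift_col0]; exact pd_const _ _ _
    | succ j =>
      rw [lift_ss]
      exact pd_zero_sp ((hg i j).differentiable (by simp)).differentiableAt

lemma pd_lift_ss (hg : ∀ i j, ContDiff ℝ (⊤ : ℕ∞) fun y => gb y i j) (x : Fin (n+1) → ℝ)
    (k : Fin n) (i j : Fin n) :
    pd k.succ (fun y => liftMetric gb y i.succ j.succ) x
      = pd k (fun y => gb y i j) (sp x) := by
  rw [lift_ss]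
  exact pd_succ_sp ((hg i j).differentiable (by simp)).differentiableAt k

lemma chr_lift_zero (hg : ∀ i j, ContDiff ℝ (⊤ : ℕ∞) fun y => gb y i j) (x : Fin (n+1) → ℝ)
    (μ ν : Fin (n+1)) :
    christoffel (liftMetric gb) (liftMetric gbinv) 0 μ ν x = 0 := by
  rw [christoffel, Fin.sum_univ_succ]
  have h1 : pd μ (fun y => liftMetric gb y 0 ν) x = 0 := by
    rw [lift_row0]; exact pd_const _ _ _
  have h2 : pd ν (fun y => liftMetric gb y 0 μ) x = 0 := by
    rw [lift_row0]; exact pd_const _ _ _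
  have h3 : pd 0 (fun y => liftMetric gb y μ ν) x = 0 := pd0_lift hg x μ ν
  rw [h1, h2, h3]
  simp [liftM_0succ]

lemma chr_lift_left0 (hg : ∀ i j, ContDiff ℝ (⊤ : ℕ∞) fun y => gb y i j) (x : Fin (n+1) → ℝ)
    (l : Fin n) (ν : Fin (n+1)) :
    christoffel (liftMetric gb) (liftMetric gbinv) l.succ 0 ν x = 0 := by
  rw [christoffel, Fin.sum_univ_succ]
  rw [liftM_succ0]
  have hterm : ∀ k : Fin n,
      liftMetric gbinv x l.succ k.succ *
        (pd 0 (fun y => liftMetric gb y k.succ ν) x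
          + pd ν (fun y => liftMetric gb y k.succ 0) x
          - pd k.succ (fun y => liftMetric gb y 0 ν) x) = 0 := by
    intro k
    have h1 : pd 0 (fun y => liftMetric gb y k.succ ν) x = 0 := pd0_lift hg x _ _
    have h2 : pd ν (fun y => liftMetric gb y k.succ 0) x = 0 := by
      rw [lift_col0]; exact pd_const _ _ _
    have h3 : pd k.succ (fun y => liftMetric gb y 0 ν) x = 0 := by
      rw [lift_row0]; exact pd_const _ _ _
    rw [h1, h2, h3]; ring
  rw [Finset.sum_congr rfl fun k _ => hterm k]
  simp

lemma chr_lift_mid0 (hg : ∀ i j, ContDiff ℝ (⊤ : ℕ∞) fun y => gb y i j) (x : Fin (n+1) → ℝ)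
    (l : Fin n) (μ : Fin (n+1)) :
    christoffel (liftMetric gb) (liftMetric gbinv) l.succ μ 0 x = 0 := by
  rw [christoffel, Fin.sum_univ_succ]
  rw [liftM_succ0]
  have hterm : ∀ k : Fin n,
      liftMetric gbinv x l.succ k.succ *
        (pd μ (fun y => liftMetric gb y k.succ 0) x
          + pd 0 (fun y => liftMetric gb y k.succ μ) x
          - pd k.succ (fun y => liftMetric gb y μ 0) x) = 0 := by
    intro k
    have h1 : pd μ (fun y => liftMetric gb y k.succ 0) x = 0 := by
      rw [lift_col0]; exact pd_const _ _ _
    have h2 : pd 0 (fun y => liftMetric gb y k.succ μ) x = 0 := pd0_lift hg x _ _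
    have h3 : pd k.succ (fun y => liftMetric gb y μ 0) x = 0 := by
      rw [lift_col0]; exact pd_const _ _ _
    rw [h1, h2, h3]; ring
  rw [Finset.sum_congr rfl fun k _ => hterm k]
  simp

lemma chr_lift_succ (hg : ∀ i j, ContDiff ℝ (⊤ : ℕ∞) fun y => gb y i j) (x : Fin (n+1) → ℝ)
    (l i j : Fin n) :
    christoffel (liftMetric gb) (liftMetric gbinv) l.succ i.succ j.succ x
      = christoffel gb gbinv l i j (sp x) := by
  rw [christoffel, christoffel, Fin.sum_univ_succ]
  rw [liftM_succ0, zero_mul, zero_add]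
  congr 1
  apply Finset.sum_congr rfl
  intro k _
  rw [liftM_succsucc, pd_lift_ss hg x i k j, pd_lift_ss hg x j k i, pd_lift_ss hg x k i j]
end Lift
/-- The full stress tensor on the lifted spacetime. -/
def Tfull {n : ℕ} (gb gbinv : (Fin n → ℝ) → Matrix (Fin n) (Fin n) ℝ)
    (v : (Fin n → ℝ) → Fin n → ℝ) (P : (Fin n → ℝ) → ℝ) :
    (Fin (n+1) → ℝ) → Fin (n+1) → Fin (n+1) → ℝ :=
  fun x μ ν => P (sp x) *
    (((n:ℝ)+1) * uvec gb v x μ * uvec gb v x ν + liftMetric gbinv x μ ν)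

/-- The spatial block of the stress tensor. -/
def Sb {n : ℕ} (gb gbinv : (Fin n → ℝ) → Matrix (Fin n) (Fin n) ℝ)
    (v : (Fin n → ℝ) → Fin n → ℝ) (P : (Fin n → ℝ) → ℝ) :
    (Fin n → ℝ) → Fin n → Fin n → ℝ :=
  fun y i r => P y * (((n:ℝ)+1) * (lorentz gb v y * v y i) * (lorentz gb v y * v y r)
    + gbinv y i r)

section LiftRed

variable {n : ℕ} {gb gbinv : (Fin n → ℝ) → Matrix (Fin n) (Fin n) ℝ}
  {v : (Fin n → ℝ) → Fin n → ℝ} {P : (Fin n → ℝ) → ℝ}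

lemma uvec_zero (x : Fin (n+1) → ℝ) : uvec gb v x 0 = lorentz gb v (sp x) := by
  simp [uvec]

lemma uvec_succ (x : Fin (n+1) → ℝ) (i : Fin n) :
    uvec gb v x i.succ = lorentz gb v (sp x) * v (sp x) i := by
  simp [uvec]

lemma Tfull_00 (x : Fin (n+1) → ℝ) :
    Tfull gb gbinv v P x 0 0
      = P (sp x) * (((n:ℝ)+1) * lorentz gb v (sp x) * lorentz gb v (sp x) + -1) := by
  rw [Tfull, uvec_zero, liftM_00]

lemma Tfull_s0 (x : Fin (n+1) → ℝ) (i : Fin n) :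
    Tfull gb gbinv v P x i.succ 0
      = (((n:ℝ)+1) * P (sp x) * lorentz gb v (sp x) ^ 2) * v (sp x) i := by
  rw [Tfull, uvec_zero, uvec_succ, liftM_succ0]
  ring

lemma Tfull_0s (x : Fin (n+1) → ℝ) (j : Fin n) :
    Tfull gb gbinv v P x 0 j.succ
      = (((n:ℝ)+1) * P (sp x) * lorentz gb v (sp x) ^ 2) * v (sp x) j := by
  rw [Tfull, uvec_zero, uvec_succ, liftM_0succ]
  ring

lemma Tfull_ss (x : Fin (n+1) → ℝ) (i j : Fin n) :
    Tfull gb gbinv v P x i.succ j.succ = Sb gb gbinv v P (sp x) i j := by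
  rw [Tfull, uvec_succ, uvec_succ, liftM_succsucc, Sb]

lemma Tfull_00_fun :
    (fun x => Tfull gb gbinv v P x 0 0)
      = fun x => (fun y => P y * (((n:ℝ)+1) * lorentz gb v y * lorentz gb v y + -1)) (sp x) :=
  funext fun x => Tfull_00 x

lemma Tfull_s0_fun (i : Fin n) :
    (fun x => Tfull gb gbinv v P x i.succ 0)
      = fun x => (fun y => (((n:ℝ)+1) * P y * lorentz gb v y ^ 2) * v y i) (sp x) :=
  funext fun x => Tfull_s0 x i

lemma Tfull_ss_fun (i j : Fin n) :
    (fun x => Tfull gb gbinv v P x i.succ j.succ)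
      = fun x => (fun y => Sb gb gbinv v P y i j) (sp x) :=
  funext fun x => Tfull_ss x i j

variable (hg : ∀ i j, ContDiff ℝ (⊤ : ℕ∞) fun y => gb y i j)
    (hginv : ∀ i j, ContDiff ℝ (⊤ : ℕ∞) fun y => gbinv y i j)
    (hv : ∀ i, ContDiff ℝ (⊤ : ℕ∞) fun y => v y i)
    (hvlt : ∀ y, vsq gb v y < 1) (hP : ContDiff ℝ (⊤ : ℕ∞) P)

include hg hginv hv hvlt hP

lemma diff_aux (y : Fin n → ℝ) :
    DifferentiableAt ℝ (fun z => P z * (((n:ℝ)+1) * lorentz gb v z * lorentz gb v z + -1)) y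
    ∧ (∀ i, DifferentiableAt ℝ (fun z => (((n:ℝ)+1) * P z * lorentz gb v z ^ 2) * v z i) y)
    ∧ (∀ i j, DifferentiableAt ℝ (fun z => Sb gb gbinv v P z i j) y) := by
  have dP : DifferentiableAt ℝ P y := (hP.differentiable (by simp)).differentiableAt
  have dγ : DifferentiableAt ℝ (lorentz gb v) y := diff_lorentz hvlt hg hv y
  have dV : ∀ k, DifferentiableAt ℝ (fun z => v z k) y :=
    fun k => ((hv k).differentiable (by simp)).differentiableAt
  have dGi : ∀ i j, DifferentiableAt ℝ (fun z => gbinv z i j) y :=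
    fun i j => ((hginv i j).differentiable (by simp)).differentiableAt
  refine ⟨?_, ?_, ?_⟩
  · exact dP.mul ((((differentiableAt_const _).mul dγ).mul dγ).add (differentiableAt_const _))
  · intro i
    exact (((differentiableAt_const _).mul dP).mul (dγ.pow 2)).mul (dV i)
  · intro i j
    exact dP.mul ((((differentiableAt_const _).mul (dγ.mul (dV i))).mul
      (dγ.mul (dV j))).add (dGi i j))

lemma div0_reduce (x : Fin (n+1) → ℝ) :
    divTensor (liftMetric gb) (liftMetric gbinv) (Tfull gb gbinv v P) 0 x
      = expansion gb gbinv
          (fun y k => (((n:ℝ)+1) * P y * lorentz gb v y ^ 2) * v y k) (sp x) := by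
  rw [divTensor]
  have hg3 : ∑ μ, ∑ ρ, christoffel (liftMetric gb) (liftMetric gbinv) 0 μ ρ x
      * Tfull gb gbinv v P x μ ρ = 0 := by
    apply Finset.sum_eq_zero; intro μ _
    apply Finset.sum_eq_zero; intro ρ _
    rw [chr_lift_zero hg, zero_mul]
  have hg2 : ∑ μ, ∑ ρ, christoffel (liftMetric gb) (liftMetric gbinv) μ μ ρ x
      * Tfull gb gbinv v P x ρ 0
      = ∑ i : Fin n, ∑ r : Fin n, christoffel gb gbinv i i r (sp x)
          * ((((n:ℝ)+1) * P (sp x) * lorentz gb v (sp x) ^ 2) * v (sp x) r) := by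
    rw [Fin.sum_univ_succ]
    have h0 : ∑ ρ, christoffel (liftMetric gb) (liftMetric gbinv) 0 0 ρ x
        * Tfull gb gbinv v P x ρ 0 = 0 :=
      Finset.sum_eq_zero fun ρ _ => by rw [chr_lift_zero hg, zero_mul]
    rw [h0, zero_add]
    apply Finset.sum_congr rfl; intro i _
    rw [Fin.sum_univ_succ, chr_lift_mid0 hg, zero_mul, zero_add]
    apply Finset.sum_congr rfl; intro r _
    rw [chr_lift_succ hg, Tfull_s0]
  have hg1 : ∑ μ, pd μ (fun y => Tfull gb gbinv v P y μ 0) x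
      = ∑ i : Fin n, pd i
          (fun y => (((n:ℝ)+1) * P y * lorentz gb v y ^ 2) * v y i) (sp x) := by
    rw [Fin.sum_univ_succ]
    have h0 : pd 0 (fun y => Tfull gb gbinv v P y 0 0) x = 0 := by
      rw [Tfull_00_fun]
      exact pd_zero_sp (diff_aux hg hginv hv hvlt hP (sp x)).1
    rw [h0, zero_add]
    apply Finset.sum_congr rfl; intro i _
    rw [Tfull_s0_fun]
    exact pd_succ_sp ((diff_aux hg hginv hv hvlt hP (sp x)).2.1 i) i
  rw [hg1, hg2, hg3, add_zero, expansion]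
  rw [← Finset.sum_add_distrib]
  apply Finset.sum_congr rfl; intro i _
  rw [covDerivVec]

lemma divj_reduce (x : Fin (n+1) → ℝ) (j : Fin n) :
    divTensor (liftMetric gb) (liftMetric gbinv) (Tfull gb gbinv v P) j.succ x
      = divTensor gb gbinv (Sb gb gbinv v P) j (sp x) := by
  rw [divTensor, divTensor]
  have hg1 : ∑ μ, pd μ (fun y => Tfull gb gbinv v P y μ j.succ) x
      = ∑ i : Fin n, pd i (fun y => Sb gb gbinv v P y i j) (sp x) := by
    rw [Fin.sum_univ_succ]
    have h0 : pd 0 (fun y => Tfull gb gbinv v P y 0 j.succ) x = 0 := by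
      have hfun : (fun x => Tfull gb gbinv v P x 0 j.succ)
          = fun x => (fun y => (((n:ℝ)+1) * P y * lorentz gb v y ^ 2) * v y j) (sp x) :=
        funext fun x => Tfull_0s x j
      rw [hfun]
      exact pd_zero_sp ((diff_aux hg hginv hv hvlt hP (sp x)).2.1 j)
    rw [h0, zero_add]
    apply Finset.sum_congr rfl; intro i _
    rw [Tfull_ss_fun]
    exact pd_succ_sp ((diff_aux hg hginv hv hvlt hP (sp x)).2.2 i j) i
  have hg2 : ∑ μ, ∑ ρ, christoffel (liftMetric gb) (liftMetric gbinv) μ μ ρ x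
      * Tfull gb gbinv v P x ρ j.succ
      = ∑ i : Fin n, ∑ r : Fin n, christoffel gb gbinv i i r (sp x)
          * Sb gb gbinv v P (sp x) r j := by
    rw [Fin.sum_univ_succ]
    have h0 : ∑ ρ, christoffel (liftMetric gb) (liftMetric gbinv) 0 0 ρ x
        * Tfull gb gbinv v P x ρ j.succ = 0 :=
      Finset.sum_eq_zero fun ρ _ => by rw [chr_lift_zero hg, zero_mul]
    rw [h0, zero_add]
    apply Finset.sum_congr rfl; intro i _
    rw [Fin.sum_univ_succ, chr_lift_mid0 hg, zero_mul, zero_add]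
    apply Finset.sum_congr rfl; intro r _
    rw [chr_lift_succ hg, Tfull_ss]
  have hg3 : ∑ μ, ∑ ρ, christoffel (liftMetric gb) (liftMetric gbinv) j.succ μ ρ x
      * Tfull gb gbinv v P x μ ρ
      = ∑ i : Fin n, ∑ r : Fin n, christoffel gb gbinv j i r (sp x)
          * Sb gb gbinv v P (sp x) i r := by
    rw [Fin.sum_univ_succ]
    have h0 : ∑ ρ, christoffel (liftMetric gb) (liftMetric gbinv) j.succ 0 ρ x
        * Tfull gb gbinv v P x 0 ρ = 0 :=
      Finset.sum_eq_zero fun ρ _ => by rw [chr_lift_left0 hg, zero_mul]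
    rw [h0, zero_add]
    apply Finset.sum_congr rfl; intro i _
    rw [Fin.sum_univ_succ, chr_lift_mid0 hg, zero_mul, zero_add]
    apply Finset.sum_congr rfl; intro r _
    rw [chr_lift_succ hg, Tfull_ss]
  rw [hg1, hg2, hg3]

end LiftRed
section SpatialVal

variable {n : ℕ} {gb gbinv : (Fin n → ℝ) → Matrix (Fin n) (Fin n) ℝ}
  {v : (Fin n → ℝ) → Fin n → ℝ} {P : (Fin n → ℝ) → ℝ}

lemma pd_sq (i : Fin n) {f : (Fin n → ℝ) → ℝ} {x : Fin n → ℝ}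
    (hf : DifferentiableAt ℝ f x) :
    pd i (fun y => f y ^ 2) x = 2 * f x * pd i f x := by
  have h2 : (fun y => f y ^ 2) = fun y => f y * f y := by funext y; ring
  rw [h2, pd_mul i hf hf]; ring

lemma div0_val (hg : ∀ i j, ContDiff ℝ (⊤ : ℕ∞) fun y => gb y i j)
    (hv : ∀ i, ContDiff ℝ (⊤ : ℕ∞) fun y => v y i)
    (hpos : ∀ y, (gb y).PosDef) (hinv : ∀ y, gb y * gbinv y = 1)
    (hvlt : ∀ y, vsq gb v y < 1) (hkilling : IsKilling gb gbinv v)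
    (hP : ContDiff ℝ (⊤ : ℕ∞) P) (y : Fin n → ℝ) :
    expansion gb gbinv
        (fun z k => (((n:ℝ)+1) * P z * lorentz gb v z ^ 2) * v z k) y
      = ((n:ℝ)+1) * lorentz gb v y ^ 2 * ∑ i, v y i * pd i P y := by
  have dP : DifferentiableAt ℝ P y := (hP.differentiable (by simp)).differentiableAt
  have dγ : DifferentiableAt ℝ (lorentz gb v) y := diff_lorentz hvlt hg hv y
  have hf : DifferentiableAt ℝ (fun z => ((n:ℝ)+1) * P z * lorentz gb v z ^ 2) y :=
    ((differentiableAt_const _).mul dP).mul (dγ.pow 2)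
  rw [expansion_smul hv y _ hf, exp_zero hg hv hpos hinv hkilling y, mul_zero, add_zero]
  have hterm : ∀ i : Fin n,
      v y i * pd i (fun z => ((n:ℝ)+1) * P z * lorentz gb v z ^ 2) y
        = (((n:ℝ)+1) * P y * (2 * lorentz gb v y)) * (v y i * pd i (lorentz gb v) y)
          + (((n:ℝ)+1) * lorentz gb v y ^ 2) * (v y i * pd i P y) := by
    intro i
    rw [pd_mul i ((differentiableAt_const _).fun_mul dP) (dγ.fun_pow 2)]
    rw [pd_sq i dγ]
    rw [pd_const_mul i _ dP]
    ring
  rw [Finset.sum_congr rfl fun i _ => hterm i, Finset.sum_add_distrib,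
    ← Finset.mul_sum, ← Finset.mul_sum,
    v_pd_lorentz hvlt hg hv hpos hinv hkilling y, mul_zero, zero_add]

lemma divGi_zero (hg : ∀ i j, ContDiff ℝ (⊤ : ℕ∞) fun y => gb y i j)
    (hginv : ∀ i j, ContDiff ℝ (⊤ : ℕ∞) fun y => gbinv y i j)
    (hpos : ∀ y, (gb y).PosDef) (hinv : ∀ y, gb y * gbinv y = 1)
    (y : Fin n → ℝ) (j : Fin n) :
    (∑ i, pd i (fun z => gbinv z i j) y)
      + (∑ i, ∑ r, christoffel gb gbinv i i r y * gbinv y r j)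
      + (∑ i, ∑ r, christoffel gb gbinv j i r y * gbinv y i r) = 0 := by
  have h : ∀ i : Fin n, pd i (fun z => gbinv z i j) y
      = -(∑ r, christoffel gb gbinv i i r y * gbinv y r j)
        - ∑ r, christoffel gb gbinv j i r y * gbinv y i r :=
    fun i => compatInv hg hginv hpos hinv y i i j
  rw [Finset.sum_congr rfl fun i _ => h i, Finset.sum_sub_distrib,
    Finset.sum_neg_distrib]
  ring

lemma divSb_val (hg : ∀ i j, ContDiff ℝ (⊤ : ℕ∞) fun y => gb y i j)
    (hginv : ∀ i j, ContDiff ℝ (⊤ : ℕ∞) fun y => gbinv y i j)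
    (hv : ∀ i, ContDiff ℝ (⊤ : ℕ∞) fun y => v y i)
    (hpos : ∀ y, (gb y).PosDef) (hinv : ∀ y, gb y * gbinv y = 1)
    (hvlt : ∀ y, vsq gb v y < 1) (hkilling : IsKilling gb gbinv v)
    (hP : ContDiff ℝ (⊤ : ℕ∞) P) (y : Fin n → ℝ) (j : Fin n) :
    divTensor gb gbinv (Sb gb gbinv v P) j y
      = v y j * (((n:ℝ)+1) * lorentz gb v y ^ 2 * ∑ i, v y i * pd i P y)
        + ∑ k, gbinv y j k * (pd k P y
            - (1/2) * ((n:ℝ)+1) * P y * lorentz gb v y ^ 2 * pd k (vsq gb v) y) := by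
  have dP : DifferentiableAt ℝ P y := (hP.differentiable (by simp)).differentiableAt
  have dγ : DifferentiableAt ℝ (lorentz gb v) y := diff_lorentz hvlt hg hv y
  have dV : ∀ k, DifferentiableAt ℝ (fun z => v z k) y :=
    fun k => ((hv k).differentiable (by simp)).differentiableAt
  have dGi : ∀ i j, DifferentiableAt ℝ (fun z => gbinv z i j) y :=
    fun i j => ((hginv i j).differentiable (by simp)).differentiableAt
  have dA : ∀ i, DifferentiableAt ℝ
      (fun z => (((n:ℝ)+1) * P z * lorentz gb v z ^ 2) * v z i) y :=
    fun i => (((differentiableAt_const _).mul dP).mul (dγ.pow 2)).mul (dV i)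
  rw [divTensor]
  have Hg1 : ∑ i, pd i (fun z => Sb gb gbinv v P z i j) y
      = v y j * (∑ i, pd i
            (fun z => (((n:ℝ)+1) * P z * lorentz gb v z ^ 2) * v z i) y)
        + (((n:ℝ)+1) * P y * lorentz gb v y ^ 2) *
            (∑ i, v y i * pd i (fun z => v z j) y)
        + (P y * (∑ i, pd i (fun z => gbinv z i j) y)
            + ∑ i, gbinv y j i * pd i P y) := by
    simp only [Finset.mul_sum]
    rw [← Finset.sum_add_distrib, ← Finset.sum_add_distrib, ← Finset.sum_add_distrib]
    apply Finset.sum_congr rfl; intro i _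
    rw [show (fun z => Sb gb gbinv v P z i j)
        = fun z => ((((n:ℝ)+1) * P z * lorentz gb v z ^ 2) * v z i) * v z j
            + P z * gbinv z i j from funext fun z => by rw [Sb]; ring]
    rw [pd_add i ((dA i).fun_mul (dV j)) (dP.fun_mul (dGi i j)),
      pd_mul i (dA i) (dV j), pd_mul i dP (dGi i j), Gi_symm hpos hinv y i j]
    ring
  have Hg2 : ∑ i, ∑ r, christoffel gb gbinv i i r y * Sb gb gbinv v P y r j
      = v y j * (∑ i, ∑ r, christoffel gb gbinv i i r y *
            ((((n:ℝ)+1) * P y * lorentz gb v y ^ 2) * v y r))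
        + P y * (∑ i, ∑ r, christoffel gb gbinv i i r y * gbinv y r j) := by
    simp only [Finset.mul_sum]
    rw [← Finset.sum_add_distrib]
    apply Finset.sum_congr rfl; intro i _
    rw [← Finset.sum_add_distrib]
    apply Finset.sum_congr rfl; intro r _
    simp only [Sb]
    ring
  have Hg3 : ∑ i, ∑ r, christoffel gb gbinv j i r y * Sb gb gbinv v P y i r
      = (((n:ℝ)+1) * P y * lorentz gb v y ^ 2) *
          (∑ i, v y i * ∑ r, christoffel gb gbinv j i r y * v y r)
        + P y * (∑ i, ∑ r, christoffel gb gbinv j i r y * gbinv y i r) := by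
    simp only [Finset.mul_sum]
    rw [← Finset.sum_add_distrib]
    apply Finset.sum_congr rfl; intro i _
    rw [← Finset.sum_add_distrib]
    apply Finset.sum_congr rfl; intro r _
    simp only [Sb]
    ring
  rw [Hg1, Hg2, Hg3]
  have hExp : expansion gb gbinv
        (fun z k => (((n:ℝ)+1) * P z * lorentz gb v z ^ 2) * v z k) y
      = (∑ i, pd i (fun z => (((n:ℝ)+1) * P z * lorentz gb v z ^ 2) * v z i) y)
        + ∑ i, ∑ r, christoffel gb gbinv i i r y *
            ((((n:ℝ)+1) * P y * lorentz gb v y ^ 2) * v y r) := by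
    rw [expansion, ← Finset.sum_add_distrib]
    apply Finset.sum_congr rfl; intro i _
    rw [covDerivVec]
  have hExpVal := div0_val hg hv hpos hinv hvlt hkilling hP y
  rw [hExp] at hExpVal
  have hD : ∑ i, v y i * covDerivVec gb gbinv v i j y
      = (∑ i, v y i * pd i (fun z => v z j) y)
        + ∑ i, v y i * ∑ r, christoffel gb gbinv j i r y * v y r := by
    rw [← Finset.sum_add_distrib]
    apply Finset.sum_congr rfl; intro i _
    rw [covDerivVec]; ring
  have hDval := vD hg hv hpos hinv hkilling y j
  rw [hD] at hDval
  have hGi0 := divGi_zero hg hginv hpos hinv y j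
  have hRHS : ∑ k, gbinv y j k * (pd k P y
        - (1/2) * ((n:ℝ)+1) * P y * lorentz gb v y ^ 2 * pd k (vsq gb v) y)
      = (∑ k, gbinv y j k * pd k P y)
        - (1/2) * ((n:ℝ)+1) * P y * lorentz gb v y ^ 2 *
            ∑ k, gbinv y j k * pd k (vsq gb v) y := by
    rw [Finset.mul_sum, ← Finset.sum_sub_distrib]
    apply Finset.sum_congr rfl; intro k _
    ring
  rw [hRHS]
  linear_combination v y j * hExpVal
    + (((n:ℝ)+1) * P y * lorentz gb v y ^ 2) * hDval + P y * hGi0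

end SpatialVal
section Final

variable {n : ℕ} {gb gbinv : (Fin n → ℝ) → Matrix (Fin n) (Fin n) ℝ}
  {v : (Fin n → ℝ) → Fin n → ℝ} {P : (Fin n → ℝ) → ℝ}

lemma clm_eq_zero (L : (Fin n → ℝ) →L[ℝ] ℝ) (h : ∀ k, L (Pi.single k 1) = 0) :
    L = 0 := by
  apply ContinuousLinearMap.ext
  intro x
  have hx : x = ∑ k, x k • (Pi.single k 1 : Fin n → ℝ) := by
    funext j
    rw [Finset.sum_apply]
    simp [Pi.single_apply]
  rw [hx, map_sum]
  simp [h]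

lemma pd_Pfpow (hg : ∀ i j, ContDiff ℝ (⊤ : ℕ∞) fun y => gb y i j)
    (hv : ∀ i, ContDiff ℝ (⊤ : ℕ∞) fun y => v y i)
    (hvlt : ∀ y, vsq gb v y < 1) (hP : ContDiff ℝ (⊤ : ℕ∞) P)
    (y : Fin n → ℝ) (k : Fin n) :
    pd k (fun z => P z * Real.sqrt (1 - vsq gb v z) ^ (n+1)) y
      = Real.sqrt (1 - vsq gb v y) ^ (n+1) *
          (pd k P y - (1/2) * ((n:ℝ)+1) * P y * lorentz gb v y ^ 2
            * pd k (vsq gb v) y) := by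
  have dP : DifferentiableAt ℝ P y := (hP.differentiable (by simp)).differentiableAt
  have df := diff_sqrt1s hvlt hg hv y
  rw [pd_mul k dP (df.fun_pow (n+1)), pd_pow k df n, pd_sqrt1s hvlt hg hv y k]
  have hlor := lorentz_mul_sqrt hvlt y
  have hfn : Real.sqrt (1 - vsq gb v y) ^ n * lorentz gb v y
      = Real.sqrt (1 - vsq gb v y) ^ (n+1) * lorentz gb v y ^ 2 := by
    have h2 : Real.sqrt (1 - vsq gb v y) ^ (n+1) * lorentz gb v y ^ 2
        = Real.sqrt (1 - vsq gb v y) ^ n *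
            ((lorentz gb v y * Real.sqrt (1 - vsq gb v y)) * lorentz gb v y) := by
      rw [pow_succ]; ring
    rw [h2, hlor, one_mul]
  linear_combination (-(1/2) * ((n:ℝ)+1) * P y * pd k (vsq gb v) y) * hfn

lemma pd_P_of_gamma (hg : ∀ i j, ContDiff ℝ (⊤ : ℕ∞) fun y => gb y i j)
    (hv : ∀ i, ContDiff ℝ (⊤ : ℕ∞) fun y => v y i)
    (hvlt : ∀ y, vsq gb v y < 1) (P₀ : ℝ)
    (hPval : ∀ y, P y = P₀ * lorentz gb v y ^ (n+1)) (y : Fin n → ℝ) (k : Fin n) :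
    pd k P y = P₀ * (((n:ℝ)+1) * lorentz gb v y ^ n * pd k (lorentz gb v) y) := by
  have hPf : P = fun z => P₀ * lorentz gb v z ^ (n+1) := funext hPval
  rw [hPf, pd_const_mul k _ ((diff_lorentz hvlt hg hv y).fun_pow (n+1)),
    pd_pow k (diff_lorentz hvlt hg hv y) n]

end Final
/-- **Proposition 2**: for a stationary, shearless and incompressible flow
u^μ = γ(1,v^i) (v Killing) on an ultrastatic spacetime of dimension d = n+1,
the conformal perfect-fluid stress tensor T^{μν} = 𝒫 (d u^μ u^ν + g^{μν}) with
time-independent pressure is conserved iff 𝒫 = 𝒫₀ γ^d for a constant 𝒫₀. -/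
theorem stress_tensor_conserved_iff_pressure_eq_gamma_pow {n : ℕ} (hn : 1 ≤ n)
    (gb gbinv : (Fin n → ℝ) → Matrix (Fin n) (Fin n) ℝ)
    (hg : ∀ i j, ContDiff ℝ (⊤ : ℕ∞) (fun y => gb y i j))
    (hginv : ∀ i j, ContDiff ℝ (⊤ : ℕ∞) (fun y => gbinv y i j))
    (hpos : ∀ y, (gb y).PosDef)
    (hinv : ∀ y, gb y * gbinv y = 1)
    (v : (Fin n → ℝ) → Fin n → ℝ)
    (hv : ∀ i, ContDiff ℝ (⊤ : ℕ∞) (fun y => v y i))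
    (hvlt : ∀ y, vsq gb v y < 1)
    (hkilling : IsKilling gb gbinv v)
    (P : (Fin n → ℝ) → ℝ) (hP : ContDiff ℝ (⊤ : ℕ∞) P) :
    (∀ (x : Fin (n+1) → ℝ) (ν : Fin (n+1)),
        divTensor (liftMetric gb) (liftMetric gbinv)
          (fun x μ ν => P (sp x) *
            (((n:ℝ)+1) * uvec gb v x μ * uvec gb v x ν + liftMetric gbinv x μ ν)) ν x = 0)
    ↔ ∃ P₀ : ℝ, ∀ y : Fin n → ℝ, P y = P₀ * lorentz gb v y ^ (n+1) := by
  have hT : (fun (x : Fin (n+1) → ℝ) (μ ν : Fin (n+1)) => P (sp x) *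
      (((n:ℝ)+1) * uvec gb v x μ * uvec gb v x ν + liftMetric gbinv x μ ν))
      = Tfull gb gbinv v P := rfl
  rw [hT]
  constructor
  · intro hcons
    -- the time component forces v·∇P = 0
    have hEP : ∀ y : Fin n → ℝ, ∑ i, v y i * pd i P y = 0 := by
      intro y
      have hsp : sp (Fin.cons (0:ℝ) y) = y := by
        funext i; simp [sp]
      have h0 := hcons (Fin.cons (0:ℝ) y) 0
      rw [div0_reduce hg hginv hv hvlt hP, hsp,
        div0_val hg hv hpos hinv hvlt hkilling hP y] at h0
      have hfac : ((n:ℝ)+1) * lorentz gb v y ^ 2 ≠ 0 := by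
        have := lorentz_pos hvlt y
        positivity
      rcases mul_eq_zero.mp h0 with h | h
      · exact absurd h hfac
      · exact h
    -- the space components force the pressure gradient equation
    have hC : ∀ (y : Fin n → ℝ) (m : Fin n),
        pd m P y - (1/2) * ((n:ℝ)+1) * P y * lorentz gb v y ^ 2
          * pd m (vsq gb v) y = 0 := by
      intro y m
      have hsp : sp (Fin.cons (0:ℝ) y) = y := by
        funext i; simp [sp]
      have hGC : ∀ j : Fin n, ∑ k, gbinv y j k * (pd k P y
          - (1/2) * ((n:ℝ)+1) * P y * lorentz gb v y ^ 2 * pd k (vsq gb v) y)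
          = 0 := by
        intro j
        have h1 := hcons (Fin.cons (0:ℝ) y) j.succ
        rw [divj_reduce hg hginv hv hvlt hP, hsp,
          divSb_val hg hginv hv hpos hinv hvlt hkilling hP y j,
          hEP y, mul_zero, mul_zero, zero_add] at h1
        exact h1
      calc pd m P y - (1/2) * ((n:ℝ)+1) * P y * lorentz gb v y ^ 2
            * pd m (vsq gb v) y
          = ∑ k, (if m = k then (1:ℝ) else 0) * (pd k P y
              - (1/2) * ((n:ℝ)+1) * P y * lorentz gb v y ^ 2 * pd k (vsq gb v) y) :=
            (sum_if_eq m (fun k => pd k P y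
              - (1/2) * ((n:ℝ)+1) * P y * lorentz gb v y ^ 2
                * pd k (vsq gb v) y)).symm
        _ = ∑ k, (∑ j, gb y m j * gbinv y j k) * (pd k P y
              - (1/2) * ((n:ℝ)+1) * P y * lorentz gb v y ^ 2 * pd k (vsq gb v) y) :=
            Finset.sum_congr rfl fun k _ => by rw [sum_GGi hinv y m k]
        _ = ∑ j, gb y m j * ∑ k, gbinv y j k * (pd k P y
              - (1/2) * ((n:ℝ)+1) * P y * lorentz gb v y ^ 2 * pd k (vsq gb v) y) :=
            (swap_mul_sum _ _ _).symm
        _ = 0 := by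
            rw [Finset.sum_congr rfl fun j (_ : j ∈ Finset.univ) =>
              by rw [hGC j, mul_zero]]
            exact Finset.sum_const_zero
    -- hence P ⋅ (√(1-v²))^{n+1} is constant
    have hdiff : Differentiable ℝ (fun z => P z * Real.sqrt (1 - vsq gb v z) ^ (n+1)) :=
      fun y => ((hP.differentiable (by simp)).differentiableAt).mul
        ((diff_sqrt1s hvlt hg hv y).pow (n+1))
    have hfz : ∀ y, fderiv ℝ (fun z => P z * Real.sqrt (1 - vsq gb v z) ^ (n+1)) y = 0 := by
      intro y
      apply clm_eq_zero
      intro k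
      have hpd : pd k (fun z => P z * Real.sqrt (1 - vsq gb v z) ^ (n+1)) y = 0 := by
        rw [pd_Pfpow hg hv hvlt hP y k, hC y k, mul_zero]
      exact hpd
    have hconst := is_const_of_fderiv_eq_zero hdiff hfz
    refine ⟨P 0 * Real.sqrt (1 - vsq gb v 0) ^ (n+1), fun y => ?_⟩
    have h1 : P y * Real.sqrt (1 - vsq gb v y) ^ (n+1)
        = P 0 * Real.sqrt (1 - vsq gb v 0) ^ (n+1) := hconst y 0
    have hlor := lorentz_mul_sqrt hvlt y
    have h2 : Real.sqrt (1 - vsq gb v y) ^ (n+1) * lorentz gb v y ^ (n+1) = 1 := by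
      rw [← mul_pow, mul_comm, hlor, one_pow]
    calc P y = (P y * Real.sqrt (1 - vsq gb v y) ^ (n+1)) * lorentz gb v y ^ (n+1) := by
          rw [mul_assoc, h2, mul_one]
      _ = (P 0 * Real.sqrt (1 - vsq gb v 0) ^ (n+1)) * lorentz gb v y ^ (n+1) := by
          rw [h1]
  · rintro ⟨P₀, hPval⟩ x ν
    have hEP : ∀ y : Fin n → ℝ, ∑ i, v y i * pd i P y = 0 := by
      intro y
      have hterm : ∀ i : Fin n, v y i * pd i P y
          = P₀ * ((n:ℝ)+1) * lorentz gb v y ^ n * (v y i * pd i (lorentz gb v) y) := by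
        intro i
        rw [pd_P_of_gamma hg hv hvlt P₀ hPval y i]
        ring
      rw [Finset.sum_congr rfl fun i _ => hterm i, ← Finset.mul_sum,
        v_pd_lorentz hvlt hg hv hpos hinv hkilling y, mul_zero]
    have hC : ∀ (y : Fin n → ℝ) (k : Fin n),
        pd k P y - (1/2) * ((n:ℝ)+1) * P y * lorentz gb v y ^ 2
          * pd k (vsq gb v) y = 0 := by
      intro y k
      rw [pd_P_of_gamma hg hv hvlt P₀ hPval y k, hPval y,
        pd_lorentz hvlt hg hv y k]
      have hpow : lorentz gb v y ^ n * lorentz gb v y ^ 3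
          = lorentz gb v y ^ (n+1) * lorentz gb v y ^ 2 := by
        rw [pow_succ]; ring
      linear_combination (P₀ * ((n:ℝ)+1) * (1/2) * pd k (vsq gb v) y) * hpow
    cases ν using Fin.cases with
    | zero =>
      rw [div0_reduce hg hginv hv hvlt hP,
        div0_val hg hv hpos hinv hvlt hkilling hP (sp x), hEP (sp x), mul_zero]
    | succ j =>
      rw [divj_reduce hg hginv hv hvlt hP,
        divSb_val hg hginv hv hpos hinv hvlt hkilling hP (sp x) j,
        hEP (sp x), mul_zero, mul_zero, zero_add]
      rw [Finset.sum_congr rfl fun k (_ : k ∈ Finset.univ) =>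
        by rw [hC (sp x) k, mul_zero]]
      exact Finset.sum_const_zero

end
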